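/- Let d ≥ 1 and ℓ > 0. Let θ = (θ₁, ..., θ_d) be a random vector in ℝ^d, let ε = (ε₁, ..., ε_d) be an independent random vector with distribution N(0, I_d), and let ψ: ℝ → ℝ be a measurable function. Then E[min{1, exp((ℓ/√d) Σ_{i=1}^d ψ(θ_i) ε_i − (ℓ²/(2d)) Σ_{i=1}^d ψ(θ_i)²)}] = 2 · E[Φ(−(ℓ/2)·√((1/d) Σ_{i=1}^d ψ(θ_i)²))]. (Closed-form for the expected acceptance probability in the Roberts–Gelman–Gilks framework, obtained by conditioning on θ, since given θ the exponent is Gaussian with mean −s²/2 and variance s² where s² = (ℓ²/d) Σ ψ(θ_i)².) -/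

import Mathlib

open MeasureTheory ProbabilityTheory Real Matrix Filter

/-- CDF of the standard normal distribution. -/
noncomputable def stdNormalCDF (x : ℝ) : ℝ :=
  ((gaussianReal 0 1) (Set.Iic x)).toReal

/-- Quadratic form `vᵀ A v`. -/
noncomputable def quadForm {d : ℕ} (A : Matrix (Fin d) (Fin d) ℝ) (v : Fin d → ℝ) : ℝ :=
  v ⬝ᵥ (A *ᵥ v)

/-- Density of the `d`-dimensional Gaussian with mean `μ` and covariance `S`. -/
noncomputable def mvGaussianPdf {d : ℕ} (μ : Fin d → ℝ) (S : Matrix (Fin d) (Fin d) ℝ)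
    (x : Fin d → ℝ) : ℝ :=
  (2 * Real.pi) ^ (-(d : ℝ) / 2) * S.det ^ (-(1 : ℝ) / 2) *
    Real.exp (-((x - μ) ⬝ᵥ (S⁻¹ *ᵥ (x - μ))) / 2)

/-- The `d`-dimensional Gaussian distribution `N(μ, S)`. -/
noncomputable def mvGaussian {d : ℕ} (μ : Fin d → ℝ) (S : Matrix (Fin d) (Fin d) ℝ) :
    Measure (Fin d → ℝ) :=
  volume.withDensity (fun x => ENNReal.ofReal (mvGaussianPdf μ S x))

/-! Given `θ`, the exponent is `Z - v / 2` with `Z ∼ N(0, v)` and `v = (ℓ² / d) ∑ ψ(θᵢ)²`,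
because a linear form `∑ bᵢ εᵢ` of a standard Gaussian vector is `N(0, ∑ bᵢ²)`. Split
`E[min 1 (e^{Z - v/2})]` at `Z = v / 2`: above, the integrand is `1` and the mass is `Φ(-√v / 2)`
by symmetry; below, the integrand `e^{Z - v/2}` is the density of `N(v, v)` against `N(0, v)`,
and `N(v, v)` gives `(-∞, v / 2)` the same mass `Φ(-√v / 2)`. -/

open scoped NNReal

lemma norm_min_one_exp_le_one (x : ℝ) : ‖min 1 (exp x)‖ ≤ 1 := by
  rw [Real.norm_of_nonneg (le_min zero_le_one (exp_nonneg x))]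
  exact min_le_left _ _

lemma gaussianPDFReal_mul_exp_tilt (m t : ℝ) {v : ℝ≥0} (hv : v ≠ 0) (x : ℝ) :
    gaussianPDFReal m v x * exp (t * (x - m) - t ^ 2 * v / 2)
      = gaussianPDFReal (m + t * v) v x := by
  have hv' : (v : ℝ) ≠ 0 := by exact_mod_cast hv
  rw [gaussianPDFReal, gaussianPDFReal, mul_assoc, ← Real.exp_add]
  congr 2
  field_simp
  ring

lemma setIntegral_exp_tilt_gaussianReal (m t : ℝ) {v : ℝ≥0} (hv : v ≠ 0) {s : Set ℝ}
    (hs : MeasurableSet s) :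
    ∫ x in s, exp (t * (x - m) - t ^ 2 * v / 2) ∂gaussianReal m v
      = (gaussianReal (m + t * v) v).real s := by
  rw [← integral_indicator hs, integral_gaussianReal_eq_integral_smul hv, measureReal_def,
    gaussianReal_apply_eq_integral _ hv, ENNReal.toReal_ofReal
      (setIntegral_nonneg hs fun x _ => gaussianPDFReal_nonneg _ _ x), ← integral_indicator hs]
  congr 1 with x
  by_cases hx : x ∈ s <;> simp [hx, gaussianPDFReal_mul_exp_tilt m t hv]

lemma gaussianReal_Ici_eq_Iic_neg (v : ℝ≥0) (t : ℝ) :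
    gaussianReal 0 v (Set.Ici t) = gaussianReal 0 v (Set.Iic (-t)) := by
  conv_lhs => rw [← neg_zero, ← gaussianReal_map_neg,
    Measure.map_apply measurable_neg measurableSet_Ici]
  congr 1 with x
  simp

lemma gaussianReal_real_Iic (v : ℝ≥0) (hv : v ≠ 0) (t : ℝ) :
    (gaussianReal 0 v).real (Set.Iic t) = stdNormalCDF (t / √v) := by
  have hsv : 0 < √(v : ℝ) := Real.sqrt_pos.2 (by positivity)
  have hstd : (gaussianReal 0 v).map (· / √v) = gaussianReal 0 1 := by
    rw [gaussianReal_map_div_const, zero_div]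
    congr 1
    ext
    simp [Real.sq_sqrt v.coe_nonneg, hv]
  rw [stdNormalCDF, ← hstd, Measure.map_apply (by fun_prop) measurableSet_Iic, measureReal_def]
  congr 2 with x
  simp [div_le_div_iff_of_pos_right hsv]

lemma stdNormalCDF_zero : stdNormalCDF 0 = 1 / 2 := by
  have := nullSingletonClass_gaussianReal (μ := 0) one_ne_zero
  have hsplit := measureReal_union_add_inter (μ := gaussianReal 0 1) (s := Set.Iic 0)
    (t := Set.Ici 0) measurableSet_Ici
  rw [Set.Iic_union_Ici, Set.Iic_inter_Ici, Set.Icc_self, probReal_univ, measureReal_def,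
    measure_singleton, ENNReal.toReal_zero, measureReal_def, measureReal_def,
    gaussianReal_Ici_eq_Iic_neg, neg_zero] at hsplit
  rw [stdNormalCDF]
  linarith

lemma integral_min_one_exp_sub_half_gaussianReal (v : ℝ≥0) :
    ∫ x, min 1 (exp (x - v / 2)) ∂gaussianReal 0 v = 2 * stdNormalCDF (-√v / 2) := by
  by_cases hv : v = 0
  · simp [hv, gaussianReal_zero_var, stdNormalCDF_zero]
  have := nullSingletonClass_gaussianReal (μ := 0) hv
  have hint : Integrable (fun x => min 1 (exp (x - v / 2))) (gaussianReal 0 v) :=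
    Integrable.of_bound (by fun_prop) 1 (ae_of_all _ fun _ => norm_min_one_exp_le_one _)
  have h_upper : ∫ x in Set.Ici (v / 2 : ℝ), min 1 (exp (x - v / 2)) ∂gaussianReal 0 v
      = (gaussianReal 0 v).real (Set.Iic (-(v / 2))) := by
    rw [setIntegral_congr_fun measurableSet_Ici (g := fun _ => 1)
      fun x hx => min_eq_left (one_le_exp (sub_nonneg.2 hx)), setIntegral_const, smul_eq_mul,
      mul_one, measureReal_def, measureReal_def, gaussianReal_Ici_eq_Iic_neg]
  have h_lower : ∫ x in Set.Iio (v / 2 : ℝ), min 1 (exp (x - v / 2)) ∂gaussianReal 0 v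
      = (gaussianReal 0 v).real (Set.Iic (-(v / 2))) := by
    have hshift : gaussianReal v v = (gaussianReal 0 v).map (· + (v : ℝ)) := by
      rw [gaussianReal_map_add_const, zero_add]
    rw [setIntegral_congr_fun measurableSet_Iio (g := fun x => exp (1 * (x - 0) - 1 ^ 2 * v / 2))
      fun x hx => by simpa using (exp_lt_one_iff.2 (sub_neg.2 hx)).le,
      setIntegral_exp_tilt_gaussianReal 0 1 hv measurableSet_Iio, zero_add, one_mul, hshift,
      map_measureReal_apply (by fun_prop) measurableSet_Iio, ← measureReal_congr Iio_ae_eq_Iic]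
    congr 1 with x
    simp only [Set.mem_preimage, Set.mem_Iio]
    constructor <;> intro h <;> linarith
  have hsqrt : (v : ℝ) / 2 / √v = √v / 2 := by rw [div_right_comm, Real.div_sqrt]
  rw [← integral_add_compl measurableSet_Ici hint, Set.compl_Ici, h_upper, h_lower,
    gaussianReal_real_Iic v hv, neg_div, hsqrt]
  ring_nf

lemma map_pi_gaussianReal_sum_mul {ι : Type*} [Fintype ι] (b : ι → ℝ) :
    (Measure.pi fun _ : ι => gaussianReal 0 1).map (fun e => ∑ i, b i * e i)
      = gaussianReal 0 (∑ i, b i ^ 2).toNNReal := by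
  set L : StrongDual ℝ (EuclideanSpace ℝ ι) := innerSL ℝ (WithLp.toLp 2 b)
  have hL : (fun e : ι → ℝ => ∑ i, b i * e i) = L ∘ WithLp.toLp 2 := by
    ext e; simp [L, PiLp.inner_apply, mul_comm]
  rw [hL, ← Measure.map_map (by fun_prop) (by fun_prop), map_pi_eq_stdGaussian,
    IsGaussian.map_eq_gaussianReal, integral_strongDual_stdGaussian, variance_dual_stdGaussian,
    innerSL_apply_norm, EuclideanSpace.real_norm_sq_eq]

lemma mvGaussianPdf_zero_one {d : ℕ} (x : Fin d → ℝ) :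
    mvGaussianPdf 0 1 x = ∏ i, gaussianPDFReal 0 1 (x i) := by
  simp only [mvGaussianPdf, gaussianPDFReal, det_one, inv_one, one_mulVec, sub_zero,
    Real.one_rpow, mul_one, NNReal.coe_one, Finset.prod_mul_distrib, Finset.prod_const,
    Finset.card_univ, Fintype.card_fin, ← Real.exp_sum]
  congr 1
  · rw [Real.sqrt_eq_rpow, ← Real.rpow_neg (by positivity), ← Real.rpow_natCast,
      ← Real.rpow_mul (by positivity)]
    ring_nf
  · rw [dotProduct, neg_div, Finset.sum_div, ← Finset.sum_neg_distrib]
    congr with i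
    ring

lemma mvGaussian_zero_one_eq_pi (d : ℕ) :
    mvGaussian 0 1 = Measure.pi fun _ : Fin d => gaussianReal 0 1 := by
  refine (Measure.pi_eq fun s hs => ?_).symm
  have hint : Integrable (fun x : Fin d → ℝ => ∏ i, gaussianPDFReal 0 1 (x i))
      (Measure.pi fun i => volume.restrict (s i)) :=
    Integrable.fintype_prod fun _ => (integrable_gaussianPDFReal 0 1).restrict
  rw [mvGaussian, withDensity_apply _ (.univ_pi hs), volume_pi, Measure.restrict_pi_pi]
  simp_rw [mvGaussianPdf_zero_one]
  rw [← ofReal_integral_eq_lintegral_ofReal hint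
      (ae_of_all _ fun x => Finset.prod_nonneg fun i _ => gaussianPDFReal_nonneg 0 1 (x i)),
    integral_fintype_prod_eq_prod,
    ENNReal.ofReal_prod_of_nonneg fun i _ => setIntegral_nonneg (hs i) fun x _ =>
      gaussianPDFReal_nonneg 0 1 x]
  simp_rw [gaussianReal_apply_eq_integral 0 one_ne_zero]

lemma integral_min_one_exp_sum_mul_sub_half {ι : Type*} [Fintype ι] (b : ι → ℝ) :
    ∫ e, min 1 (exp (∑ i, b i * e i - (∑ i, b i ^ 2) / 2))
        ∂Measure.pi (fun _ : ι => gaussianReal 0 1) = 2 * stdNormalCDF (-√(∑ i, b i ^ 2) / 2) := by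
  have hv : ((∑ i, b i ^ 2).toNNReal : ℝ) = ∑ i, b i ^ 2 := Real.coe_toNNReal _ (by positivity)
  rw [← hv, ← integral_map (f := fun y => min 1 (exp (y - (∑ i, b i ^ 2).toNNReal / 2)))
    (Measurable.aemeasurable (by fun_prop)) (by fun_prop), map_pi_gaussianReal_sum_mul,
    integral_min_one_exp_sub_half_gaussianReal]

lemma ProbabilityTheory.IndepFun.integral_comp_eq_integral_integral_map {Ω α β E : Type*}
    [MeasurableSpace Ω] [MeasurableSpace α] [MeasurableSpace β]
    [NormedAddCommGroup E] [NormedSpace ℝ E] {P : Measure Ω} [IsFiniteMeasure P]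
    {X : Ω → α} {Y : Ω → β} (hXY : IndepFun X Y P)
    (hX : AEMeasurable X P) (hY : AEMeasurable Y P) {F : α → β → E}
    (hF : Integrable (Function.uncurry F) ((P.map X).prod (P.map Y))) :
    ∫ ω, F (X ω) (Y ω) ∂P = ∫ ω, ∫ y, F (X ω) y ∂P.map Y ∂P := by
  have hjoint := (indepFun_iff_map_prod_eq_prod_map_map hX hY).1 hXY
  calc ∫ ω, F (X ω) (Y ω) ∂P = ∫ p, Function.uncurry F p ∂P.map (fun ω => (X ω, Y ω)) := by
        rw [integral_map (hX.prodMk hY) (hjoint ▸ hF.aestronglyMeasurable)]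
        rfl
    _ = ∫ x, ∫ y, F x y ∂P.map Y ∂P.map X := by rw [hjoint, integral_prod _ hF]; rfl
    _ = ∫ ω, ∫ y, F (X ω) y ∂P.map Y ∂P :=
        integral_map hX hF.integral_prod_left.aestronglyMeasurable

theorem acceptance_rgg_closed_form_general {d : ℕ} (l : ℝ) (hl : 0 < l)
    {Ω : Type*} [MeasureSpace Ω] [IsProbabilityMeasure (ℙ : Measure Ω)]
    (θ ε : Ω → (Fin d → ℝ)) (hθm : Measurable θ) (hεm : Measurable ε)
    (hε : Measure.map ε ℙ = mvGaussian 0 1)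
    (hindep : IndepFun θ ε ℙ)
    (ψ : ℝ → ℝ) (hψ : Measurable ψ) :
    ∫ ω, min 1 (Real.exp ((l / Real.sqrt (d : ℝ)) * ∑ i, ψ (θ ω i) * ε ω i
        - (l ^ 2 / (2 * (d : ℝ))) * ∑ i, ψ (θ ω i) ^ 2)) ∂ℙ
      = 2 * ∫ ω, stdNormalCDF (-(l / 2) *
          Real.sqrt ((1 / (d : ℝ)) * ∑ i, ψ (θ ω i) ^ 2)) ∂ℙ := by
  set c := l / √d
  have hc : c ^ 2 = l ^ 2 / d := by rw [div_pow, Real.sq_sqrt d.cast_nonneg]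
  set F : (Fin d → ℝ) → (Fin d → ℝ) → ℝ := fun a e =>
    min 1 (exp (∑ i, c * ψ (a i) * e i - (∑ i, (c * ψ (a i)) ^ 2) / 2))
  have hF : Integrable (Function.uncurry F) ((Measure.map θ ℙ).prod (Measure.map ε ℙ)) :=
    Integrable.of_bound (Measurable.aestronglyMeasurable (by fun_prop)) 1
      (ae_of_all _ fun _ => norm_min_one_exp_le_one _)
  have hinner : ∀ a, ∫ e, F a e ∂Measure.map ε ℙ
      = 2 * stdNormalCDF (-(l / 2) * √((1 / d) * ∑ i, ψ (a i) ^ 2)) := by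
    intro a
    have hnorm : √(∑ i, (c * ψ (a i)) ^ 2) = l * √((1 / d) * ∑ i, ψ (a i) ^ 2) := by
      simp_rw [mul_pow, ← Finset.mul_sum, hc]
      rw [div_mul_eq_mul_div, mul_div_assoc, ← one_div_mul_eq_div, Real.sqrt_mul (sq_nonneg l),
        Real.sqrt_sq hl.le]
    rw [hε, mvGaussian_zero_one_eq_pi, integral_min_one_exp_sum_mul_sub_half, hnorm]
    congr 2
    ring
  calc _ = ∫ ω, F (θ ω) (ε ω) ∂ℙ := by
        congr with ω
        simp only [F, mul_pow, mul_assoc, ← Finset.mul_sum, hc]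
        ring_nf
    _ = ∫ ω, ∫ e, F (θ ω) e ∂Measure.map ε ℙ ∂ℙ :=
        hindep.integral_comp_eq_integral_integral_map hθm.aemeasurable hεm.aemeasurable hF
    _ = _ := by simp_rw [hinner, integral_const_mul]

/-- Closed form for the expected acceptance probability in the Roberts–Gelman–Gilks
framework: for a random vector `θ`, an independent `ε ∼ N(0, I_d)` and measurable `ψ`,
`E[min{1, exp((ℓ/√d)∑ᵢψ(θᵢ)εᵢ − (ℓ²/(2d))∑ᵢψ(θᵢ)²)}] = 2 E[Φ(−(ℓ/2)√((1/d)∑ᵢψ(θᵢ)²))]`. -/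
theorem acceptance_rgg_closed_form {d : ℕ} (hd : 1 ≤ d) (l : ℝ) (hl : 0 < l)
    {Ω : Type*} [MeasureSpace Ω] [IsProbabilityMeasure (ℙ : Measure Ω)]
    (θ ε : Ω → (Fin d → ℝ)) (hθm : Measurable θ) (hεm : Measurable ε)
    (hε : Measure.map ε ℙ = mvGaussian 0 1)
    (hindep : IndepFun θ ε ℙ)
    (ψ : ℝ → ℝ) (hψ : Measurable ψ) :
    ∫ ω, min 1 (Real.exp ((l / Real.sqrt (d : ℝ)) * ∑ i, ψ (θ ω i) * ε ω i
        - (l ^ 2 / (2 * (d : ℝ))) * ∑ i, ψ (θ ω i) ^ 2)) ∂ℙ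
      = 2 * ∫ ω, stdNormalCDF (-(l / 2) *
          Real.sqrt ((1 / (d : ℝ)) * ∑ i, ψ (θ ω i) ^ 2)) ∂ℙ :=
  acceptance_rgg_closed_form_general l hl θ ε hθm hεm hε hindep ψ hψ
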